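/- Let E ∈ R^{d×n} and k ≥ 1. A pair (d̂, α̂) with ‖d̂‖₂ = 1, ‖α̂‖₀ ≤ k, and Eα̂ ≠ 0 minimizes ‖E − dαᵀ‖_F² over {(d,α) : ‖d‖₂ = 1, ‖α‖₀ ≤ k} if and only if ŵ = α̂/‖α̂‖₂ maximizes wᵀEᵀEw over {w ∈ R^n : ‖w‖₂ = 1, ‖w‖₀ ≤ k}, with d̂ = Eŵ/‖Eŵ‖₂ and α̂ = ‖Eŵ‖₂·ŵ. -/

import Mathlib

open Matrix BigOperators

noncomputable def frob2 {d n : ℕ} (M : Matrix (Fin d) (Fin n) ℝ) : ℝ :=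
  ∑ i, ∑ j, (M i j) ^ 2

noncomputable def enorm2 {n : ℕ} (v : Fin n → ℝ) : ℝ :=
  Real.sqrt (∑ i, v i ^ 2)

noncomputable def spars {n : ℕ} (v : Fin n → ℝ) : ℕ :=
  Nat.card {i : Fin n // v i ≠ 0}

/-! For unit vectors `u`, `v` and a scalar `t`,
`‖E - u (t v)ᵀ‖_F² = ‖E‖_F² - ‖Ev‖² + (t - ‖Ev‖)² + 2t (‖Ev‖ - ⟨u, Ev⟩)`,
and for `t ≥ 0` both correction terms are nonnegative by Cauchy–Schwarz. Hence the error of a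
sparse pair `(u, a)` is at least `‖E‖_F² - ‖Ev‖²` for the direction `v = a / ‖a‖`, with equality
exactly when `t = ‖Ev‖` and `u = Ev / ‖Ev‖`. Conversely every sparse unit `v` is the direction of
the sparse pair `(Ev / ‖Ev‖, ‖Ev‖ v)` attaining that bound, so minimising the error is the same as
maximising `‖Ev‖² = vᵀEᵀEv` over sparse unit vectors. -/

section Vectors

variable {n : ℕ}

lemma enorm2_eq_norm (v : Fin n → ℝ) : enorm2 v = ‖WithLp.toLp 2 v‖ := by
  simp [enorm2, EuclideanSpace.norm_eq]

lemma dotProduct_eq_inner (u v : Fin n → ℝ) :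
    u ⬝ᵥ v = inner ℝ (WithLp.toLp 2 u) (WithLp.toLp 2 v) := by
  simp [EuclideanSpace.inner_toLp_toLp, dotProduct_comm]

lemma sq_enorm2 (v : Fin n → ℝ) : enorm2 v ^ 2 = ∑ i, v i ^ 2 :=
  Real.sq_sqrt (by positivity)

lemma enorm2_nonneg (v : Fin n → ℝ) : 0 ≤ enorm2 v :=
  Real.sqrt_nonneg _

lemma enorm2_eq_one {v : Fin n → ℝ} (hv : ∑ i, v i ^ 2 = 1) : enorm2 v = 1 := by
  simp [enorm2, hv]

lemma enorm2_pos {v : Fin n → ℝ} (hv : v ≠ 0) : 0 < enorm2 v := by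
  rw [enorm2_eq_norm, norm_pos_iff]
  simpa using hv

lemma dotProduct_le_enorm2_mul (u v : Fin n → ℝ) : u ⬝ᵥ v ≤ enorm2 u * enorm2 v := by
  simpa only [dotProduct_eq_inner, enorm2_eq_norm] using real_inner_le_norm _ _

lemma sum_sq_div_enorm2 {v : Fin n → ℝ} (hv : v ≠ 0) : ∑ i, (v i / enorm2 v) ^ 2 = 1 := by
  simp_rw [div_pow, ← Finset.sum_div, ← sq_enorm2]
  exact div_self (pow_pos (enorm2_pos hv) 2).ne'

lemma enorm2_smul_div_enorm2 (v : Fin n → ℝ) : (enorm2 v • fun i => v i / enorm2 v) = v := by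
  rcases eq_or_ne v 0 with rfl | hv
  · simp [enorm2]
  · ext i
    simp [mul_div_cancel₀ _ (enorm2_pos hv).ne']

lemma div_enorm2_dotProduct_self (v : Fin n → ℝ) : (fun i => v i / enorm2 v) ⬝ᵥ v = enorm2 v := by
  rcases eq_or_ne v 0 with rfl | hv
  · simp [enorm2]
  · simp_rw [dotProduct, div_mul_eq_mul_div, ← Finset.sum_div, ← sq, ← sq_enorm2]
    field_simp [(enorm2_pos hv).ne']

lemma eq_div_enorm2_of_dotProduct_eq {u y : Fin n → ℝ} (hu : ∑ i, u i ^ 2 = 1) (hy : y ≠ 0)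
    (h : u ⬝ᵥ y = enorm2 y) : u = fun i => y i / enorm2 y := by
  rw [dotProduct_eq_inner, enorm2_eq_norm] at h
  have hu' : ‖WithLp.toLp 2 u‖ = 1 := by rw [← enorm2_eq_norm, enorm2_eq_one hu]
  have hsmul := inner_eq_norm_mul_iff_real.1 (by rw [h, hu', one_mul])
  rw [hu', one_smul, ← enorm2_eq_norm] at hsmul
  ext i
  have hi := congrArg (· i) hsmul
  simp only [PiLp.smul_apply, smul_eq_mul] at hi
  rw [eq_div_iff (enorm2_pos hy).ne', mul_comm, hi]

lemma spars_smul {c : ℝ} (hc : c ≠ 0) (v : Fin n → ℝ) : spars (c • v) = spars v :=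
  Nat.card_congr (Equiv.subtypeEquivRight fun i => by simp [hc])

lemma spars_div_enorm2 (v : Fin n → ℝ) : spars (fun i => v i / enorm2 v) = spars v := by
  rcases eq_or_ne v 0 with rfl | hv
  · simp [enorm2, Pi.zero_def]
  · exact Nat.card_congr (Equiv.subtypeEquivRight fun i => by simp [(enorm2_pos hv).ne'])

end Vectors

section RankOne

variable {d n : ℕ} (E : Matrix (Fin d) (Fin n) ℝ)

lemma dotProduct_transpose_mul_self_mulVec (v : Fin n → ℝ) :
    v ⬝ᵥ (Eᵀ * E) *ᵥ v = enorm2 (E *ᵥ v) ^ 2 := by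
  rw [← mulVec_mulVec, dotProduct_mulVec, vecMul_transpose, sq_enorm2]
  simp [dotProduct, sq]

lemma frob2_sub_vecMulVec (u : Fin d → ℝ) (a : Fin n → ℝ) :
    frob2 (E - vecMulVec u a)
      = frob2 E - 2 * (u ⬝ᵥ E *ᵥ a) + (∑ i, u i ^ 2) * (∑ j, a j ^ 2) := by
  have hentry : ∀ i j, (E - vecMulVec u a) i j ^ 2
      = E i j ^ 2 - 2 * (u i * (E i j * a j)) + u i ^ 2 * a j ^ 2 := fun i j => by
    rw [Matrix.sub_apply, vecMulVec_apply]; ring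
  rw [Finset.sum_mul_sum]
  simp only [frob2, hentry, Finset.sum_add_distrib, Finset.sum_sub_distrib, dotProduct, mulVec,
    Finset.mul_sum]

lemma frob2_sub_vecMulVec_zero (u : Fin d → ℝ) : frob2 (E - vecMulVec u 0) = frob2 E := by
  simp [frob2, vecMulVec_apply]

lemma frob2_sub_vecMulVec_smul {u : Fin d → ℝ} {v : Fin n → ℝ} (hu : ∑ i, u i ^ 2 = 1)
    (hv : ∑ j, v j ^ 2 = 1) (t : ℝ) :
    frob2 (E - vecMulVec u (t • v)) = frob2 E - enorm2 (E *ᵥ v) ^ 2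
      + (t - enorm2 (E *ᵥ v)) ^ 2 + 2 * t * (enorm2 (E *ᵥ v) - u ⬝ᵥ E *ᵥ v) := by
  have hsq : ∑ j, (t • v) j ^ 2 = t ^ 2 := by
    simp [mul_pow, ← Finset.mul_sum, hv]
  rw [frob2_sub_vecMulVec, hu, hsq, mulVec_smul, dotProduct_smul, smul_eq_mul]
  ring

variable {E}

lemma frob2_sub_sq_le_frob2_sub_vecMulVec_smul {u : Fin d → ℝ} {v : Fin n → ℝ}
    (hu : ∑ i, u i ^ 2 = 1) (hv : ∑ j, v j ^ 2 = 1) {t : ℝ} (ht : 0 ≤ t) :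
    frob2 E - enorm2 (E *ᵥ v) ^ 2 ≤ frob2 (E - vecMulVec u (t • v)) := by
  have hcs := dotProduct_le_enorm2_mul u (E *ᵥ v)
  rw [enorm2_eq_one hu, one_mul] at hcs
  rw [frob2_sub_vecMulVec_smul E hu hv]
  nlinarith [sq_nonneg (t - enorm2 (E *ᵥ v)), mul_nonneg ht (sub_nonneg.2 hcs)]

lemma frob2_sub_vecMulVec_div_enorm2 {v : Fin n → ℝ} (hv : ∑ j, v j ^ 2 = 1)
    (hEv : E *ᵥ v ≠ 0) :
    frob2 (E - vecMulVec (fun i => (E *ᵥ v) i / enorm2 (E *ᵥ v)) (enorm2 (E *ᵥ v) • v))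
      = frob2 E - enorm2 (E *ᵥ v) ^ 2 := by
  rw [frob2_sub_vecMulVec_smul E (sum_sq_div_enorm2 hEv) hv, div_enorm2_dotProduct_self]
  ring

lemma eq_of_frob2_sub_vecMulVec_smul_le {u : Fin d → ℝ} {v : Fin n → ℝ}
    (hu : ∑ i, u i ^ 2 = 1) (hv : ∑ j, v j ^ 2 = 1) {t : ℝ} (ht : 0 ≤ t) (hEv : E *ᵥ v ≠ 0)
    (h : frob2 (E - vecMulVec u (t • v)) ≤ frob2 E - enorm2 (E *ᵥ v) ^ 2) :
    t = enorm2 (E *ᵥ v) ∧ u = fun i => (E *ᵥ v) i / enorm2 (E *ᵥ v) := by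
  have hcs := dotProduct_le_enorm2_mul u (E *ᵥ v)
  rw [enorm2_eq_one hu, one_mul] at hcs
  rw [frob2_sub_vecMulVec_smul E hu hv] at h
  have hpos := enorm2_pos hEv
  have htr : t = enorm2 (E *ᵥ v) := by
    nlinarith [sq_nonneg (t - enorm2 (E *ᵥ v)), mul_nonneg ht (sub_nonneg.2 hcs)]
  subst htr
  refine ⟨rfl, eq_div_enorm2_of_dotProduct_eq hu hEv ?_⟩
  nlinarith

end RankOne

section SparsePCA

variable {d n k : ℕ} {E : Matrix (Fin d) (Fin n) ℝ}

lemma dotProduct_transpose_mul_self_mulVec_le_of_isMin {u₀ : Fin d → ℝ} {a₀ : Fin n → ℝ}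
    (hu₀ : ∑ i, u₀ i ^ 2 = 1)
    (hmin : ∀ (u : Fin d → ℝ) (a : Fin n → ℝ), ∑ i, u i ^ 2 = 1 → spars a ≤ k →
      frob2 (E - vecMulVec u₀ a₀) ≤ frob2 (E - vecMulVec u a))
    {v : Fin n → ℝ} (hv : ∑ j, v j ^ 2 = 1) (hvk : spars v ≤ k) :
    v ⬝ᵥ (Eᵀ * E) *ᵥ v ≤ frob2 E - frob2 (E - vecMulVec u₀ a₀) := by
  rw [dotProduct_transpose_mul_self_mulVec]
  rcases eq_or_ne (E *ᵥ v) 0 with hEv | hEv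
  · have := hmin u₀ 0 hu₀ (by simp [spars])
    rw [frob2_sub_vecMulVec_zero] at this
    simp [hEv, enorm2, this]
  · have := hmin _ _ (sum_sq_div_enorm2 hEv) ((spars_smul (enorm2_pos hEv).ne' v).trans_le hvk)
    rw [frob2_sub_vecMulVec_div_enorm2 hv hEv] at this
    linarith

lemma frob2_sub_le_frob2_sub_vecMulVec_of_isMax {w : Fin n → ℝ}
    (hmax : ∀ v : Fin n → ℝ, ∑ j, v j ^ 2 = 1 → spars v ≤ k →
      v ⬝ᵥ (Eᵀ * E) *ᵥ v ≤ w ⬝ᵥ (Eᵀ * E) *ᵥ w)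
    {u : Fin d → ℝ} {a : Fin n → ℝ} (hu : ∑ i, u i ^ 2 = 1) (hak : spars a ≤ k) :
    frob2 E - w ⬝ᵥ (Eᵀ * E) *ᵥ w ≤ frob2 (E - vecMulVec u a) := by
  rcases eq_or_ne a 0 with rfl | ha
  · rw [frob2_sub_vecMulVec_zero, dotProduct_transpose_mul_self_mulVec]
    linarith [sq_nonneg (enorm2 (E *ᵥ w))]
  · have hv := hmax _ (sum_sq_div_enorm2 ha) ((spars_div_enorm2 a).trans_le hak)
    rw [dotProduct_transpose_mul_self_mulVec] at hv
    rw [← enorm2_smul_div_enorm2 a]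
    linarith [frob2_sub_sq_le_frob2_sub_vecMulVec_smul (E := E) hu (sum_sq_div_enorm2 ha)
      (enorm2_nonneg a)]

end SparsePCA

theorem stmt9_general (d n k : ℕ) (E : Matrix (Fin d) (Fin n) ℝ)
    (dh : Fin d → ℝ) (ah : Fin n → ℝ)
    (hd : ∑ i, dh i ^ 2 = 1) (ha : spars ah ≤ k) (hEa : E.mulVec ah ≠ 0) :
    (∀ (u : Fin d → ℝ) (a : Fin n → ℝ), ∑ i, u i ^ 2 = 1 → spars a ≤ k →
        frob2 (E - Matrix.vecMulVec dh ah) ≤ frob2 (E - Matrix.vecMulVec u a)) ↔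
    ((∑ i, (fun j => ah j / enorm2 ah) i ^ 2 = 1 ∧ spars (fun j => ah j / enorm2 ah) ≤ k) ∧
      (∀ v : Fin n → ℝ, ∑ i, v i ^ 2 = 1 → spars v ≤ k →
        v ⬝ᵥ (Eᵀ * E).mulVec v ≤
          (fun j => ah j / enorm2 ah) ⬝ᵥ (Eᵀ * E).mulVec (fun j => ah j / enorm2 ah)) ∧
      dh = (fun i => E.mulVec (fun j => ah j / enorm2 ah) i /
              enorm2 (E.mulVec (fun j => ah j / enorm2 ah))) ∧
      ah = (fun j => enorm2 (E.mulVec (fun j' => ah j' / enorm2 ah)) * (ah j / enorm2 ah))) := by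
  have hah : ah ≠ 0 := by rintro rfl; exact hEa (mulVec_zero E)
  set w : Fin n → ℝ := fun j => ah j / enorm2 ah
  have hw : ∑ j, w j ^ 2 = 1 := sum_sq_div_enorm2 hah
  have hwk : spars w ≤ k := (spars_div_enorm2 ah).trans_le ha
  have hah_eq : ah = enorm2 ah • w := (enorm2_smul_div_enorm2 ah).symm
  have hEw : E *ᵥ w ≠ 0 := fun h => hEa (by rw [hah_eq, mulVec_smul, h, smul_zero])
  constructor
  · intro hmin
    have hlower : frob2 E - enorm2 (E *ᵥ w) ^ 2 ≤ frob2 (E - vecMulVec dh ah) := by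
      rw [hah_eq]; exact frob2_sub_sq_le_frob2_sub_vecMulVec_smul hd hw (enorm2_nonneg ah)
    have hww := dotProduct_transpose_mul_self_mulVec_le_of_isMin hd hmin hw hwk
    rw [dotProduct_transpose_mul_self_mulVec] at hww
    obtain ⟨hnorm, hdh⟩ := eq_of_frob2_sub_vecMulVec_smul_le hd hw (enorm2_nonneg ah) hEw
      (by rw [← hah_eq]; linarith)
    refine ⟨⟨hw, hwk⟩, fun v hv hvk => ?_, hdh, ?_⟩
    · rw [dotProduct_transpose_mul_self_mulVec E w]
      linarith [dotProduct_transpose_mul_self_mulVec_le_of_isMin hd hmin hv hvk]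
    · rw [← hnorm]; exact hah_eq
  · rintro ⟨-, hmax, hdh, hah'⟩ u a hu hak
    rw [hdh, show ah = enorm2 (E *ᵥ w) • w from hah', frob2_sub_vecMulVec_div_enorm2 hw hEw,
      ← dotProduct_transpose_mul_self_mulVec]
    exact frob2_sub_le_frob2_sub_vecMulVec_of_isMax hmax hu hak

theorem stmt9 (d n k : ℕ) (hk : 1 ≤ k) (E : Matrix (Fin d) (Fin n) ℝ)
    (dh : Fin d → ℝ) (ah : Fin n → ℝ)
    (hd : ∑ i, dh i ^ 2 = 1) (ha : spars ah ≤ k) (hEa : E.mulVec ah ≠ 0) :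
    (∀ (u : Fin d → ℝ) (a : Fin n → ℝ), ∑ i, u i ^ 2 = 1 → spars a ≤ k →
        frob2 (E - Matrix.vecMulVec dh ah) ≤ frob2 (E - Matrix.vecMulVec u a)) ↔
    ((∑ i, (fun j => ah j / enorm2 ah) i ^ 2 = 1 ∧ spars (fun j => ah j / enorm2 ah) ≤ k) ∧
      (∀ v : Fin n → ℝ, ∑ i, v i ^ 2 = 1 → spars v ≤ k →
        v ⬝ᵥ (Eᵀ * E).mulVec v ≤
          (fun j => ah j / enorm2 ah) ⬝ᵥ (Eᵀ * E).mulVec (fun j => ah j / enorm2 ah)) ∧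
      dh = (fun i => E.mulVec (fun j => ah j / enorm2 ah) i /
              enorm2 (E.mulVec (fun j => ah j / enorm2 ah))) ∧
      ah = (fun j => enorm2 (E.mulVec (fun j' => ah j' / enorm2 ah)) * (ah j / enorm2 ah))) :=
  stmt9_general d n k E dh ah hd ha hEa
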